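/- Under the joint law of (X, Y₁, …, Y_K) described in the context, the expected one-sided distortion of the select-max estimator equals E[X − Ŷ] = D / (K − (K−1)·λ·D). -/

import Mathlib

open MeasureTheory

/-- The one-sided exponential distribution `Exp(r)`, with density `r·e^{−r x}` on `x ≥ 0`. -/
noncomputable def expMeasure (r : ℝ) : Measure ℝ :=
  volume.withDensity fun x => if 0 ≤ x then ENNReal.ofReal (r * Real.exp (-r * x)) else 0

/-- The forward test channel `κ(x)` of the one-sided exponential source: an atom of mass
`e^{−δx}` at `0` plus the density `y ↦ δ·e^{−δ(x−y)}` on the interval `(0, x]`. -/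
noncomputable def expChannel (δ : ℝ) (x : ℝ) : Measure ℝ :=
  (ENNReal.ofReal (Real.exp (-δ * x))) • Measure.dirac 0 +
    volume.withDensity
      ((Set.Ioc (0 : ℝ) x).indicator fun y => ENNReal.ofReal (δ * Real.exp (-δ * (x - y))))

/-- The joint law of `(X, Y₁, …, Y_K)`: the composition of `Exp(λ)` (the law of `X`) with the
`K`-fold product kernel `x ↦ κ(x)^{⊗K}`, so that `Y₁, …, Y_K` are conditionally i.i.d. given `X`
with conditional law `κ(X)`. -/
noncomputable def jointLaw (lam δ : ℝ) (K : ℕ) : Measure (ℝ × (Fin K → ℝ)) :=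
  (expMeasure lam).bind fun x =>
    (Measure.pi fun _ : Fin K => expChannel δ x).map fun ys => (x, ys)

/-!
Given `X = x`, each `x - Yᵢ` is at least `t ∈ [0, x]` with probability `e^{-δt}`, so
`x - Ŷ = minᵢ (x - Yᵢ)` is at least `t` with probability `e^{-Kδt}·1{t ≤ x}`. Averaging over
`X ~ Exp(λ)` gives `P(X - Ŷ ≥ t) = e^{-(λ + Kδ)t}`: the distortion `X - Ŷ` is itself exponential,
with rate `λ + Kδ = (K - (K - 1)λD)/D`, and its mean is the reciprocal of that rate.
-/

open Set
open scoped ENNReal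

section MeasurableFamilies

variable {α β : Type*} [MeasurableSpace α] [MeasurableSpace β]

theorem Measurable.measure_pi {ι : Type*} [Fintype ι] {X : ι → Type*}
    [∀ i, MeasurableSpace (X i)] {μ : α → (i : ι) → Measure (X i)}
    [∀ a i, IsFiniteMeasure (μ a i)] (hμ : ∀ i, Measurable fun a => μ a i) :
    Measurable fun a => Measure.pi (μ a) := by
  have h_box : ∀ s ∈ univ.pi '' univ.pi fun i => {t : Set (X i) | MeasurableSet t},
      Measurable fun a => Measure.pi (μ a) s := by
    rintro _ ⟨t, ht, rfl⟩
    simp_rw [Measure.pi_pi]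
    exact Finset.measurable_prod _ fun i _ =>
      (Measure.measurable_coe (ht i (mem_univ i))).comp (hμ i)
  refine .measure_of_isPiSystem generateFrom_pi.symm isPiSystem_pi h_box ?_
  simpa only [pi_univ] using h_box univ ⟨fun _ => univ, fun _ _ => MeasurableSet.univ, pi_univ _⟩

theorem Measurable.map_prodMk_left_of_finite {ν : α → Measure β} [∀ a, IsFiniteMeasure (ν a)]
    (hν : Measurable ν) : Measurable fun a => (ν a).map (Prod.mk a) := by
  refine Measure.measurable_of_measurable_coe _ fun s hs => ?_
  simp_rw [Measure.map_apply measurable_prodMk_left hs]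
  exact ProbabilityTheory.Kernel.measurable_kernel_prodMk_left_of_finite (κ := ⟨ν, hν⟩) hs
    inferInstance

end MeasurableFamilies

theorem lintegral_Ioi_exp_neg_mul {r : ℝ} (hr : 0 < r) (c : ℝ) :
    ∫⁻ x in Ioi c, ENNReal.ofReal (Real.exp (-r * x)) = ENNReal.ofReal (Real.exp (-r * c) / r) := by
  rw [← ofReal_integral_eq_lintegral_ofReal (exp_neg_integrableOn_Ioi c hr)
    (.of_forall fun _ => (Real.exp_pos _).le), integral_exp_mul_Ioi (neg_lt_zero.2 hr),
    neg_div_neg_eq]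

theorem integral_eq_inv_of_measure_le_eq_exp {Ω : Type*} [MeasurableSpace Ω] {ν : Measure Ω}
    [IsProbabilityMeasure ν] {f : Ω → ℝ} (hf : Measurable f) {r : ℝ} (hr : 0 < r)
    (htail : ∀ t, 0 ≤ t → ν {ω | t ≤ f ω} = ENNReal.ofReal (Real.exp (-r * t))) :
    ∫ ω, f ω ∂ν = r⁻¹ := by
  have hf_nonneg : ∀ᵐ ω ∂ν, 0 ≤ f ω :=
    (ae_iff_measure_eq (measurableSet_le measurable_const hf).nullMeasurableSet).2 <| by
      rw [measure_univ, htail 0 le_rfl, mul_zero, Real.exp_zero, ENNReal.ofReal_one]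
  rw [integral_eq_lintegral_of_nonneg_ae hf_nonneg hf.aestronglyMeasurable,
    lintegral_eq_lintegral_meas_le ν hf_nonneg hf.aemeasurable,
    setLIntegral_congr_fun measurableSet_Ioi fun t ht => htail t (le_of_lt ht),
    lintegral_Ioi_exp_neg_mul hr, mul_zero, Real.exp_zero, one_div,
    ENNReal.toReal_ofReal (inv_nonneg.2 hr.le)]

section ExpMeasure

variable {r : ℝ}

theorem expMeasure_Iio_zero (r : ℝ) : expMeasure r (Iio 0) = 0 := by
  rw [expMeasure, withDensity_apply _ measurableSet_Iio,
    setLIntegral_congr_fun measurableSet_Iio fun x (hx : x < 0) => if_neg (not_le.2 hx),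
    lintegral_zero]

theorem ae_nonneg_expMeasure (r : ℝ) : ∀ᵐ x ∂expMeasure r, 0 ≤ x :=
  ae_iff.2 <| measure_mono_null (fun _ hx => not_le.1 hx) (expMeasure_Iio_zero r)

theorem expMeasure_Ici (hr : 0 < r) {t : ℝ} (ht : 0 ≤ t) :
    expMeasure r (Ici t) = ENNReal.ofReal (Real.exp (-r * t)) := by
  rw [expMeasure, withDensity_apply _ measurableSet_Ici, ← restrict_Ioi_eq_restrict_Ici,
    setLIntegral_congr_fun measurableSet_Ioi fun x (hx : t < x) => if_pos (ht.trans hx.le)]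
  simp_rw [ENNReal.ofReal_mul hr.le]
  rw [lintegral_const_mul _ (by fun_prop), lintegral_Ioi_exp_neg_mul hr,
    ← ENNReal.ofReal_mul hr.le, mul_div_cancel₀ _ hr.ne']

theorem isProbabilityMeasure_expMeasure (hr : 0 < r) : IsProbabilityMeasure (expMeasure r) := by
  constructor
  rw [← Iio_union_Ici, measure_union (Iio_disjoint_Ici le_rfl) measurableSet_Ici,
    expMeasure_Iio_zero, expMeasure_Ici hr le_rfl, mul_zero, Real.exp_zero, ENNReal.ofReal_one,
    zero_add]

end ExpMeasure

section ExpChannel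

variable {δ x : ℝ}

theorem measurable_expChannel (δ : ℝ) : Measurable (expChannel δ) := by
  unfold expChannel
  refine Measurable.add (by fun_prop) (measurable_withDensity ?_)
  exact Measurable.indicator (by fun_prop)
    ((measurableSet_lt measurable_const measurable_snd).inter
      (measurableSet_le measurable_snd measurable_fst))

theorem expChannel_apply {s : Set ℝ} (hs : MeasurableSet s) :
    expChannel δ x s = s.indicator (fun _ => ENNReal.ofReal (Real.exp (-δ * x))) 0
      + ∫⁻ y in s ∩ Ioc 0 x, ENNReal.ofReal (δ * Real.exp (-δ * (x - y))) := by
  rw [expChannel, Measure.add_apply, Measure.smul_apply, Measure.dirac_apply' _ hs,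
    withDensity_apply _ hs, setLIntegral_indicator measurableSet_Ioc, inter_comm]
  by_cases h0 : (0 : ℝ) ∈ s <;> simp [h0]

-- For `x < 0` the channel is a single atom of mass `e^{-δx}`, finite but not a probability
-- measure; this is why the measurability lemmas above ask only for finite measures.
instance (δ x : ℝ) : IsFiniteMeasure (expChannel δ x) := by
  have h_density : Integrable (fun y => δ * Real.exp (-δ * (x - y))) (volume.restrict (Ioc 0 x)) :=
    (Continuous.integrableOn_Icc (by fun_prop)).mono_set Ioc_subset_Icc_self
  constructor
  rw [expChannel_apply MeasurableSet.univ, indicator_univ, univ_inter]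
  exact ENNReal.add_lt_top.2 ⟨ENNReal.ofReal_lt_top, h_density.lintegral_lt_top⟩

theorem lintegral_Ioc_expChannel_density (hδ : 0 ≤ δ) {a b : ℝ} (hab : a ≤ b) :
    ∫⁻ y in Ioc a b, ENNReal.ofReal (δ * Real.exp (-δ * (x - y)))
      = ENNReal.ofReal (Real.exp (-δ * (x - b)) - Real.exp (-δ * (x - a))) := by
  have h_deriv (y : ℝ) :
      HasDerivAt (fun y => Real.exp (-δ * (x - y))) (δ * Real.exp (-δ * (x - y))) y := by
    simpa [mul_comm] using (((hasDerivAt_id y).const_sub x).const_mul (-δ)).exp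
  have h_cont : Continuous fun y => δ * Real.exp (-δ * (x - y)) := by fun_prop
  rw [← ofReal_integral_eq_lintegral_ofReal
      (h_cont.integrableOn_Icc.mono_set Ioc_subset_Icc_self)
      (.of_forall fun _ => by positivity),
    ← intervalIntegral.integral_of_le hab,
    intervalIntegral.integral_eq_sub_of_hasDerivAt (fun y _ => h_deriv y)
      (h_cont.intervalIntegrable a b)]

theorem expChannel_Iic_of_neg {c : ℝ} (hc : c < 0) : expChannel δ x (Iic c) = 0 := by
  have h_inter : Iic c ∩ Ioc 0 x = ∅ :=
    eq_empty_of_forall_notMem fun y hy => (hy.1.trans_lt hc).not_gt hy.2.1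
  simp [expChannel_apply measurableSet_Iic, h_inter, hc]

theorem expChannel_Iic (hδ : 0 ≤ δ) {c : ℝ} (hc : 0 ≤ c) (hcx : c ≤ x) :
    expChannel δ x (Iic c) = ENNReal.ofReal (Real.exp (-δ * (x - c))) := by
  have h_inter : Iic c ∩ Ioc 0 x = Ioc 0 c := by
    rw [inter_comm, Ioc_inter_Iic, min_eq_right hcx]
  have h_mono : Real.exp (-δ * x) ≤ Real.exp (-δ * (x - c)) :=
    Real.exp_le_exp.2 (by nlinarith)
  rw [expChannel_apply measurableSet_Iic, indicator_of_mem (mem_Iic.2 hc), h_inter,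
    lintegral_Ioc_expChannel_density hδ hc, sub_zero,
    ← ENNReal.ofReal_add (Real.exp_pos _).le (sub_nonneg.2 h_mono), add_sub_cancel]

theorem expChannel_Ioi_self (hx : 0 ≤ x) : expChannel δ x (Ioi x) = 0 := by
  have h_inter : Ioi x ∩ Ioc 0 x = ∅ :=
    eq_empty_of_forall_notMem fun y hy => hy.1.not_ge hy.2.2
  simp [expChannel_apply measurableSet_Ioi, h_inter, hx]

theorem isProbabilityMeasure_expChannel (hδ : 0 ≤ δ) (hx : 0 ≤ x) :
    IsProbabilityMeasure (expChannel δ x) := by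
  constructor
  rw [← Iic_union_Ioi (a := x), measure_union (Iic_disjoint_Ioi le_rfl) measurableSet_Ioi,
    expChannel_Iic hδ hx le_rfl, expChannel_Ioi_self hx, sub_self, mul_zero, Real.exp_zero,
    ENNReal.ofReal_one, add_zero]

end ExpChannel

theorem setOf_iSup_le_eq_pi {ι : Type*} [Finite ι] [Nonempty ι] (c : ℝ) :
    {ys : ι → ℝ | ⨆ i, ys i ≤ c} = univ.pi fun _ => Iic c := by
  ext ys
  simp only [mem_ofPred_eq, ciSup_le_iff (Finite.bddAbove_range ys), mem_pi, mem_univ, mem_Iic,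
    forall_const]

section JointLaw

variable {lam δ : ℝ} {K : ℕ}

theorem expChannel_Iic_sub (hδ : 0 ≤ δ) {t : ℝ} (ht : 0 ≤ t) (x : ℝ) :
    expChannel δ x (Iic (x - t))
      = (Ici t).indicator (fun _ => ENNReal.ofReal (Real.exp (-δ * t))) x := by
  by_cases hxt : t ≤ x
  · rw [expChannel_Iic hδ (sub_nonneg.2 hxt) (sub_le_self x ht), sub_sub_cancel,
      indicator_of_mem (mem_Ici.2 hxt)]
  · rw [expChannel_Iic_of_neg (by linarith), indicator_of_notMem (notMem_Ici.2 (not_le.1 hxt))]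

theorem pi_expChannel_iSup_le_sub (hδ : 0 ≤ δ) (hK : K ≠ 0) {t : ℝ} (ht : 0 ≤ t) (x : ℝ) :
    Measure.pi (fun _ : Fin K => expChannel δ x) {ys | ⨆ i, ys i ≤ x - t}
      = (Ici t).indicator (fun _ => ENNReal.ofReal (Real.exp (-(K * δ) * t))) x := by
  have : Nonempty (Fin K) := Fin.pos_iff_nonempty.1 (Nat.pos_of_ne_zero hK)
  rw [setOf_iSup_le_eq_pi, Measure.pi_pi, Finset.prod_const, Finset.card_fin,
    expChannel_Iic_sub hδ ht]
  by_cases hxt : x ∈ Ici t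
  · rw [indicator_of_mem hxt, indicator_of_mem hxt, ← ENNReal.ofReal_pow (Real.exp_pos _).le,
      ← Real.exp_nat_mul]
    ring_nf
  · rw [indicator_of_notMem hxt, indicator_of_notMem hxt, zero_pow hK]

theorem measurable_jointLaw_kernel (δ : ℝ) (K : ℕ) :
    Measurable fun x => (Measure.pi fun _ : Fin K => expChannel δ x).map fun ys => (x, ys) :=
  Measurable.map_prodMk_left_of_finite (.measure_pi fun _ => measurable_expChannel δ)

theorem isProbabilityMeasure_jointLaw (hlam : 0 < lam) (hδ : 0 ≤ δ) :
    IsProbabilityMeasure (jointLaw lam δ K) := by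
  have := isProbabilityMeasure_expMeasure hlam
  refine isProbabilityMeasure_bind (measurable_jointLaw_kernel δ K).aemeasurable ?_
  filter_upwards [ae_nonneg_expMeasure lam] with x hx
  have := isProbabilityMeasure_expChannel hδ hx
  exact Measure.isProbabilityMeasure_map measurable_prodMk_left.aemeasurable

theorem measurable_sub_iSup (K : ℕ) :
    Measurable fun p : ℝ × (Fin K → ℝ) => p.1 - ⨆ i, p.2 i := by
  fun_prop

theorem jointLaw_le_sub_iSup (hlam : 0 < lam) (hδ : 0 ≤ δ) (hK : K ≠ 0) {t : ℝ} (ht : 0 ≤ t) :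
    jointLaw lam δ K {p | t ≤ p.1 - ⨆ i, p.2 i}
      = ENNReal.ofReal (Real.exp (-(lam + K * δ) * t)) := by
  have hS := measurableSet_le (measurable_const (a := t)) (measurable_sub_iSup K)
  rw [jointLaw, Measure.bind_apply hS (measurable_jointLaw_kernel δ K).aemeasurable]
  simp_rw [Measure.map_apply measurable_prodMk_left hS, preimage_ofPred_eq, le_sub_comm (a := t),
    pi_expChannel_iSup_le_sub hδ hK ht]
  rw [lintegral_indicator_const measurableSet_Ici, expMeasure_Ici hlam ht,
    ← ENNReal.ofReal_mul (Real.exp_pos _).le, ← Real.exp_add]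
  ring_nf

end JointLaw

/-- under the joint law of `(X, Y₁, …, Y_K)`, the expected one-sided distortion of
the select-max estimator `Ŷ = max{Y₁,…,Y_K}` equals `E[X − Ŷ] = D / (K − (K−1)·λ·D)`. -/
theorem selectMax_expected_distortion (lam D : ℝ) (hlam : 0 < lam) (hD : 0 < D)
    (hD' : D < 1 / lam) (K : ℕ) (hK : 1 ≤ K) :
    ∫ p, (p.1 - ⨆ i, p.2 i) ∂(jointLaw lam (1 / D - lam) K)
      = D / (K - (K - 1) * lam * D) := by
  have hδ : 0 ≤ 1 / D - lam := sub_nonneg.2 ((le_one_div hD hlam).1 hD'.le)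
  have hrate : 0 < lam + K * (1 / D - lam) := by positivity
  have := isProbabilityMeasure_jointLaw (K := K) hlam hδ
  rw [integral_eq_inv_of_measure_le_eq_exp (measurable_sub_iSup K) hrate
    fun t ht => jointLaw_le_sub_iSup hlam hδ (by omega) ht]
  field_simp
  ring
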